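/- (Second duality theorem.) Let λ, μ be partitions of length l with l ≥ |μ| ≥ |λ|, set m = max(λ_1, μ_1) and regard the conjugate partitions λ′, μ′ as partitions of length m; set n = max(λ′_1, μ′_1), λ̃ = (n−λ′_m, …, n−λ′_1) and μ̃ = (n−μ′_m, …, n−μ′_1). Then for any integer k ≥ (|μ|−|λ|)/2: v_{λ,μ}(q) = K^{D_m}_{λ̃+kκ_m, μ̃+kκ_m}(q) and V_{λ,μ}(q) = K^{C_m}_{λ̃+kκ_m, μ̃+kκ_m}(q), where v_{λ,μ}(q) = u_{λ′,μ′}(q) and V_{λ,μ}(q) = U_{λ′,μ′}(q), computed in rank m. -/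

import Mathlib

open scoped BigOperators

noncomputable section

/-- Integral weights of rank `m`, identified with `ℤ^m`. -/
abbrev Wt (m : ℕ) := Fin m → ℤ

/-- Rational weights of rank `m` (needed for the half-integral `ρ` of type `B`). -/
abbrev QWt (m : ℕ) := Fin m → ℚ

/-- Coercion of an integral weight to a rational weight. -/
def castWt {m : ℕ} (β : Wt m) : QWt m := fun i => (β i : ℚ)

/-- The standard basis vector `ε_i` of `ℤ^m`. -/
def eps {m : ℕ} (i : Fin m) : Wt m := fun j => if j = i then 1 else 0

/-- `ρ_m = (m, m-1, ..., 1)`. -/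
def rhoZ (m : ℕ) : Wt m := fun i => (m : ℤ) - (i : ℕ)

/-- `κ_m = (1, ..., 1)`. -/
def kappa (m : ℕ) : Wt m := fun _ => 1

/-- A partition of length `m`: a weakly decreasing element of `ℕ^m` (written in `ℤ^m`). -/
def IsPart {m : ℕ} (lam : Wt m) : Prop := Antitone lam ∧ ∀ i, 0 ≤ lam i

/-- `|λ| = λ_1 + ⋯ + λ_m`. -/
def wtSum {m : ℕ} (lam : Wt m) : ℤ := ∑ i, lam i

/-- The conjugate partition, regarded as a partition of length `n`:
`λ'_j = #{i : λ_i ≥ j}` (with `j` one-based). -/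
def conj {m : ℕ} (n : ℕ) (lam : Wt m) : Wt n :=
  fun j => ((Finset.univ.filter (fun i : Fin m => ((j : ℕ) : ℤ) < lam i)).card : ℤ)

/-- The permutation action of `S_m` on `ℤ^m`. -/
def pact {m : ℕ} (σ : Equiv.Perm (Fin m)) (β : Wt m) : Wt m := β ∘ σ.symm

/-- The permutation action of `S_m` on `ℚ^m`. -/
def qpact {m : ℕ} (σ : Equiv.Perm (Fin m)) (β : QWt m) : QWt m := β ∘ σ.symm

/-- The dot action `σ ∘ α = σ(α + ρ_m) - ρ_m`. -/
def dotAct {m : ℕ} (σ : Equiv.Perm (Fin m)) (α : Wt m) : Wt m :=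
  pact σ (α + rhoZ m) - rhoZ m

/-- The three root-system types considered in the paper. -/
inductive RT | B | C | D
deriving DecidableEq

/-- The action of a signed permutation `(σ, ε)` on `ℚ^m`: the hyperoctahedral group
`W_{B_m} = W_{C_m}` consists of all such pairs. -/
def sact {m : ℕ} (σ : Equiv.Perm (Fin m)) (ε : Fin m → Bool) (β : QWt m) : QWt m :=
  fun i => (if ε i then -1 else 1) * β (σ.symm i)

/-- `(-1)^{l(w)}` for a signed permutation `w = (σ, ε)`: the sign character of the
hyperoctahedral group, which takes value `-1` on each Coxeter generator. -/
def ssign {m : ℕ} (σ : Equiv.Perm (Fin m)) (ε : Fin m → Bool) : ℤ :=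
  (Equiv.Perm.sign σ : ℤ) * ∏ i, (if ε i then -1 else 1)

/-- Which signed permutations belong to the Weyl group of type `g`: for `B` and `C` all of
them, for `D` only those changing an even number of signs. -/
def allowed (g : RT) {m : ℕ} (ε : Fin m → Bool) : Prop :=
  g = RT.D → (∏ i, (if ε i then (-1 : ℤ) else 1)) = 1

instance (g : RT) {m : ℕ} : DecidablePred (allowed g (m := m)) := by
  unfold allowed; infer_instance

/-- The Laurent polynomial ring `ℤ[x_1^{±1/2}, ..., x_m^{±1/2}]` (allowing all rational
exponents), realized as the group algebra of `ℚ^m`. -/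
abbrev LQ (m : ℕ) := AddMonoidAlgebra ℤ (QWt m)

/-- The monomial `x^β`. -/
def XQ {m : ℕ} (β : QWt m) : LQ m := AddMonoidAlgebra.single β 1

instance {m : ℕ} : IsDomain (LQ m) := NoZeroDivisors.to_isDomain _

/-- The fraction field of the Laurent polynomial ring, in which Schur functions live. -/
abbrev KK (m : ℕ) := FractionRing (LQ m)

def toK {m : ℕ} (p : LQ m) : KK m := algebraMap (LQ m) (KK m) p

/-- The half-sum of positive roots: `ρ_B = ρ_m - (1/2,…,1/2)`, `ρ_C = ρ_m`,
`ρ_D = ρ_m - (1,…,1)`. -/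
def rhoG (g : RT) (m : ℕ) : QWt m :=
  match g with
  | RT.B => fun i => ((m : ℚ) - (i : ℕ)) - 1/2
  | RT.C => fun i => (m : ℚ) - (i : ℕ)
  | RT.D => fun i => ((m : ℚ) - (i : ℕ)) - 1

/-- `a_β = Σ_{w ∈ W_g} (-1)^{l(w)} x^{w(β)}`. -/
def aalt (g : RT) {m : ℕ} (β : QWt m) : LQ m :=
  ∑ σ : Equiv.Perm (Fin m), ∑ ε ∈ Finset.univ.filter (allowed g),
    ssign σ ε • XQ (sact σ ε β)

/-- The Schur function `s_ν^g = a_{ν+ρ_g} / a_{ρ_g}`. -/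
def SchurF (g : RT) {m : ℕ} (ν : QWt m) : KK m :=
  toK (aalt g (ν + rhoG g m)) / toK (aalt g (rhoG g m))

/-- The one-row weight `(k, 0, …, 0)`. -/
def rowWt (m : ℕ) (k : ℤ) : QWt m := fun i => if (i : ℕ) = 0 then (k : ℚ) else 0

/-- The one-column weight `(1^p, 0^{m-p})`. -/
def colWt (m : ℕ) (p : ℤ) : QWt m := fun i => if ((i : ℕ) : ℤ) < p then 1 else 0

/-- `h_k^g = s_{(k,0,…,0)}^g` for `k ≥ 0`, and `0` for `k < 0`. -/
def hF (g : RT) (m : ℕ) (k : ℤ) : KK m := if 0 ≤ k then SchurF g (rowWt m k) else 0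

/-- `H_k^g = h_k^g + h_{k-2}^g + ⋯ + h_{k mod 2}^g` for `k ≥ 0`, and `0` for `k < 0`. -/
def HF (g : RT) (m : ℕ) (k : ℤ) : KK m :=
  if 0 ≤ k then ∑ j ∈ Finset.range (k.toNat / 2 + 1), hF g m (k - 2 * j) else 0

/-- `e_p^g = s^g_{(1^p,0^{m-p})}` for `0 ≤ p ≤ m`, `e_p^g = e^g_{2m-p}` for `m < p ≤ 2m`,
and `0` otherwise. -/
def eF (g : RT) (m : ℕ) (p : ℤ) : KK m :=
  if 0 ≤ p ∧ p ≤ (m : ℤ) then SchurF g (colWt m p)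
  else if (m : ℤ) < p ∧ p ≤ 2 * m then SchurF g (colWt m (2 * m - p))
  else 0

/-- `E_k^g = e_k^g + e_{k-2}^g + ⋯ + e_{k mod 2}^g` for `k ≥ 0`, and `0` for `k < 0`. -/
def EF (g : RT) (m : ℕ) (k : ℤ) : KK m :=
  if 0 ≤ k then ∑ j ∈ Finset.range (k.toNat / 2 + 1), eF g m (k - 2 * j) else 0

/-- The `m × m` determinant `u_α^g` (in the one-row characters `h^g`). -/
def uDet (g : RT) {m : ℕ} (α : Wt m) : KK m :=
  Matrix.det (Matrix.of fun i j : Fin m =>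
    if (j : ℕ) = 0 then hF g m (α i - (i : ℕ))
    else hF g m (α i - (i : ℕ) + (j : ℕ)) + hF g m (α i - (i : ℕ) - (j : ℕ)))

/-- The `n × n` determinant `v_β^g` (in the one-column characters `e^g` of rank `m`). -/
def vDet (g : RT) (m : ℕ) {n : ℕ} (β : Wt n) : KK m :=
  Matrix.det (Matrix.of fun i j : Fin n =>
    if (j : ℕ) = 0 then eF g m (β i - (i : ℕ))
    else eF g m (β i - (i : ℕ) + (j : ℕ)) + eF g m (β i - (i : ℕ) - (j : ℕ)))

/-- `h_α^g = h^g_{α_1} ⋯ h^g_{α_m}` (and similarly for arbitrary index length). -/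
def hProd (g : RT) (m : ℕ) {n : ℕ} (α : Wt n) : KK m := ∏ i, hF g m (α i)

def HProd (g : RT) (m : ℕ) {n : ℕ} (α : Wt n) : KK m := ∏ i, HF g m (α i)

def eProd (g : RT) (m : ℕ) {n : ℕ} (α : Wt n) : KK m := ∏ i, eF g m (α i)

def EProd (g : RT) (m : ℕ) {n : ℕ} (α : Wt n) : KK m := ∏ i, EF g m (α i)

/-- The Laurent polynomial ring `ℤ[x_1^{±1}, ..., x_m^{±1}]`, realized as the group
algebra of `ℤ^m`. -/
abbrev LZ (m : ℕ) := AddMonoidAlgebra ℤ (Wt m)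

/-- The monomial `x^β`. -/
def XZ {m : ℕ} (β : Wt m) : LZ m := AddMonoidAlgebra.single β 1

/-- `φ_m = ∏_{1≤i<j≤m} (1 - x_i/x_j) · ∏_{1≤r<s≤m} (1 - 1/(x_r x_s))`; its coefficients
are the function `a` (resp. `f_{q=1}` up to expansion conventions). -/
def phiSmall (m : ℕ) : LZ m :=
  (∏ p ∈ Finset.univ.filter (fun p : Fin m × Fin m => p.1 < p.2),
      (1 - XZ (eps p.1 - eps p.2))) *
  (∏ p ∈ Finset.univ.filter (fun p : Fin m × Fin m => p.1 < p.2),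
      (1 - XZ (-(eps p.1 + eps p.2))))

/-- `Φ_m = ∏_{1≤i<j≤m} (1 - x_i/x_j) · ∏_{1≤r≤s≤m} (1 - 1/(x_r x_s))`. -/
def phiBig (m : ℕ) : LZ m :=
  (∏ p ∈ Finset.univ.filter (fun p : Fin m × Fin m => p.1 < p.2),
      (1 - XZ (eps p.1 - eps p.2))) *
  (∏ p ∈ Finset.univ.filter (fun p : Fin m × Fin m => p.1 ≤ p.2),
      (1 - XZ (-(eps p.1 + eps p.2))))

/-- The coefficient `a(γ)` of `x^γ` in `φ_m`. -/
def coeffSmall (m : ℕ) (γ : Wt m) : ℤ := (phiSmall m).coeff γ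

/-- The coefficient `A(γ)` of `x^γ` in `Φ_m`. -/
def coeffBig (m : ℕ) (γ : Wt m) : ℤ := (phiBig m).coeff γ

/-- The generic `q`-partition function attached to a finite family `v` of vectors:
the coefficient of `q^d` counts the families `(n_i)` of nonnegative integers with
`Σ n_i = d` and `Σ n_i v_i = β`.  This encodes the coefficient of `x^β` in the formal
series expansion of `∏_i (1 - q x^{v_i})^{-1}` as a power series in `q`. -/
def PqPS {m : ℕ} {ι : Type} [Fintype ι] (v : ι → Wt m) (β : QWt m) : PowerSeries ℤ :=
  PowerSeries.mk fun d =>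
    (Nat.card {n : ι → ℕ // (∑ i, n i) = d ∧ castWt (∑ i, (n i : ℤ) • v i) = β} : ℤ)

/-- The specialization at `q = 1` of `PqPS`: the number of ways to write `β` as a
nonnegative integral combination of the vectors `v_i`. -/
def POne {m : ℕ} {ι : Type} [Fintype ι] (v : ι → Wt m) (β : Wt m) : ℤ :=
  (Nat.card {n : ι → ℕ // (∑ i, (n i : ℤ) • v i) = β} : ℤ)

/-- Index type for the pairs `1 ≤ i < j ≤ m`. -/
abbrev IdxLT (m : ℕ) := {p : Fin m × Fin m // p.1 < p.2}

/-- Index type for the pairs `1 ≤ i ≤ j ≤ m`. -/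
abbrev IdxLE (m : ℕ) := {p : Fin m × Fin m // p.1 ≤ p.2}

/-- The positive roots `ε_i - ε_j` (`i < j`) of type `A_m`. -/
def rootsA (m : ℕ) : IdxLT m → Wt m := fun p => eps p.1.1 - eps p.1.2

/-- The positive roots of type `B_m`. -/
def rootsB (m : ℕ) : IdxLT m ⊕ IdxLT m ⊕ Fin m → Wt m
  | .inl p => eps p.1.1 - eps p.1.2
  | .inr (.inl p) => eps p.1.1 + eps p.1.2
  | .inr (.inr i) => eps i

/-- The positive roots of type `C_m` (note `2ε_i = ε_i + ε_i`). -/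
def rootsC (m : ℕ) : IdxLT m ⊕ IdxLE m → Wt m
  | .inl p => eps p.1.1 - eps p.1.2
  | .inr p => eps p.1.1 + eps p.1.2

/-- The positive roots of type `D_m`. -/
def rootsD (m : ℕ) : IdxLT m ⊕ IdxLT m → Wt m
  | .inl p => eps p.1.1 - eps p.1.2
  | .inr p => eps p.1.1 + eps p.1.2

/-- The vectors `ε_i - ε_j` (`i < j`) and `-(ε_r + ε_s)` (`r < s`), whose `q`-partition
function is `f_q`. -/
def vfSmall (m : ℕ) : IdxLT m ⊕ IdxLT m → Wt m
  | .inl p => eps p.1.1 - eps p.1.2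
  | .inr p => -(eps p.1.1 + eps p.1.2)

/-- The vectors `ε_i - ε_j` (`i < j`) and `-(ε_r + ε_s)` (`r ≤ s`), whose `q`-partition
function is `F_q`. -/
def vfBig (m : ℕ) : IdxLT m ⊕ IdxLE m → Wt m
  | .inl p => eps p.1.1 - eps p.1.2
  | .inr p => -(eps p.1.1 + eps p.1.2)

/-- `f_q`. -/
def fq {m : ℕ} (β : Wt m) : PowerSeries ℤ := PqPS (vfSmall m) (castWt β)

/-- `F_q`. -/
def Fq {m : ℕ} (β : Wt m) : PowerSeries ℤ := PqPS (vfBig m) (castWt β)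

/-- The `q`-analogue of Kostant's partition function, type `A_m`. -/
def PqA {m : ℕ} (β : QWt m) : PowerSeries ℤ := PqPS (rootsA m) β

/-- The `q`-analogue of Kostant's partition function, types `B_m`, `C_m`, `D_m`. -/
def PqG (g : RT) {m : ℕ} (β : QWt m) : PowerSeries ℤ :=
  match g with
  | RT.B => PqPS (rootsB m) β
  | RT.C => PqPS (rootsC m) β
  | RT.D => PqPS (rootsD m) β

/-- The Kostka–Foulkes polynomial
`K^g_{λ,μ}(q) = Σ_{w ∈ W_g} (-1)^{l(w)} P_q^g(w(λ+ρ_g) - (μ+ρ_g))`. -/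
def KF (g : RT) {m : ℕ} (lam mu : QWt m) : PowerSeries ℤ :=
  ∑ σ : Equiv.Perm (Fin m), ∑ ε ∈ Finset.univ.filter (allowed g),
    ssign σ ε • PqG g (sact σ ε (lam + rhoG g m) - (mu + rhoG g m))

/-- The Kostka–Foulkes polynomial of type `A_m`,
`K^{A_m}_{λ,γ}(q) = Σ_{σ ∈ S_m} (-1)^{l(σ)} P_q^{A_m}(σ(λ+ρ_m) - (γ+ρ_m))`,
defined for arbitrary `γ ∈ ℤ^m`. -/
def KFA {m : ℕ} (lam gamma : Wt m) : PowerSeries ℤ :=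
  ∑ σ : Equiv.Perm (Fin m),
    (Equiv.Perm.sign σ : ℤ) • PqA (castWt (pact σ (lam + rhoZ m) - (gamma + rhoZ m)))

/-- `u_{λ,μ}(q) = Σ_{σ ∈ S_m} (-1)^{l(σ)} f_q(σ(λ+ρ_m) - μ - ρ_m)`. -/
def uP {m : ℕ} (lam mu : Wt m) : PowerSeries ℤ :=
  ∑ σ : Equiv.Perm (Fin m),
    (Equiv.Perm.sign σ : ℤ) • fq (pact σ (lam + rhoZ m) - mu - rhoZ m)

/-- `U_{λ,μ}(q) = Σ_{σ ∈ S_m} (-1)^{l(σ)} F_q(σ(λ+ρ_m) - μ - ρ_m)`. -/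
def UP {m : ℕ} (lam mu : Wt m) : PowerSeries ℤ :=
  ∑ σ : Equiv.Perm (Fin m),
    (Equiv.Perm.sign σ : ℤ) • Fq (pact σ (lam + rhoZ m) - mu - rhoZ m)

/-- `f_q` specialized at `q = 1`. -/
def fOne {m : ℕ} (β : Wt m) : ℤ := POne (vfSmall m) β

/-- `F_q` specialized at `q = 1`. -/
def FOne {m : ℕ} (β : Wt m) : ℤ := POne (vfBig m) β

/-- `u_{λ,μ}(1)`. -/
def uP1 {m : ℕ} (lam mu : Wt m) : ℤ :=
  ∑ σ : Equiv.Perm (Fin m),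
    (Equiv.Perm.sign σ : ℤ) * fOne (pact σ (lam + rhoZ m) - mu - rhoZ m)

/-- `U_{λ,μ}(1)`. -/
def UP1 {m : ℕ} (lam mu : Wt m) : ℤ :=
  ∑ σ : Equiv.Perm (Fin m),
    (Equiv.Perm.sign σ : ℤ) * FOne (pact σ (lam + rhoZ m) - mu - rhoZ m)

/-- `λ̂ = (n - λ_m, …, n - λ_1)`. -/
def hatP {m : ℕ} (n : ℤ) (lam : Wt m) : Wt m := fun i => n - lam i.rev

/-- The involution `I(α_1, …, α_m) = (-α_m, …, -α_1)`. -/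
def invI {m : ℕ} (α : Wt m) : Wt m := fun i => -α i.rev

/-- `σ*`, defined by `σ*(k) = σ(m - k + 1)`. -/
def starPerm {m : ℕ} (σ : Equiv.Perm (Fin m)) : Equiv.Perm (Fin m) :=
  (Fin.revPerm).trans σ

/-- The number of ways to write `β = Σ_{1≤r≤s≤m} e_{r,s} (ε_r + ε_s)`, `e_{r,s} ∈ ℕ`. -/
def cC (m : ℕ) (β : Wt m) : ℕ :=
  Nat.card {e : IdxLE m → ℕ // (∑ p, (e p : ℤ) • (eps p.1.1 + eps p.1.2)) = β}

/-- The number of ways to write `β = Σ_{1≤r<s≤m} e_{r,s} (ε_r + ε_s)`, `e_{r,s} ∈ ℕ`. -/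
def cD (m : ℕ) (β : Wt m) : ℕ :=
  Nat.card {e : IdxLT m → ℕ // (∑ p, (e p : ℤ) • (eps p.1.1 + eps p.1.2)) = β}

/-- The set `C_k^m`. -/
def setC (m k : ℕ) : Set (Wt m) :=
  {β | (∃ e : IdxLE m → ℕ, (∑ p, (e p : ℤ) • (eps p.1.1 + eps p.1.2)) = β) ∧
       wtSum β = 2 * k}

/-- The set `D_k^m`. -/
def setD (m k : ℕ) : Set (Wt m) :=
  {β | (∃ e : IdxLT m → ℕ, (∑ p, (e p : ℤ) • (eps p.1.1 + eps p.1.2)) = β) ∧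
       wtSum β = 2 * k}

/-!
The involution `I(α) = (-α_m, …, -α_1)` carries the vectors `ε_i - ε_j` (`i < j`) and
`-(ε_r + ε_s)` defining `f_q` (resp. `F_q`) bijectively onto the positive roots of `D_m`
(resp. `C_m`), so `P^D_q ∘ I = f_q` and `P^C_q ∘ I = F_q`.

In the alternating sum defining `K^g_{λ̃+kκ, μ̃+kκ}`, a Weyl group element that changes
some signs contributes nothing. Its argument has coordinate sum at most
`(|μ'| - |λ'|) - 2(k + 1) < 0`, where `|μ'| - |λ'| = |μ| - |λ| ∈ [0, 2k]`: every coordinate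
of `λ̃ + kκ + ρ_g` is at least `k + ρ_g` (as `λ'_j ≤ n`), and the flipped coordinates carry
`ρ_g`-weight at least `1` (`ρ_C ≥ 1`, while in type `D` at least two coordinates are flipped
and only one has `ρ_D = 0`). Positive roots have nonnegative coordinate sum, so the partition
function vanishes there. For a plain permutation `σ` the argument is `I` of the argument of
`u` (resp. `U`) at `w₀ σ w₀`, and conjugation by the longest element `w₀` preserves the sign.
-/

section Involution

variable {m : ℕ}

lemma castWt_injective : Function.Injective (castWt (m := m)) :=
  Int.cast_injective.comp_left

@[simp]
lemma invI_invI (β : Wt m) : invI (invI β) = β := by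
  funext i; simp [invI]

def invIEquiv (m : ℕ) : Wt m ≃+ Wt m where
  toFun := invI
  invFun := invI
  left_inv := invI_invI
  right_inv := invI_invI
  map_add' a b := by funext i; simp [invI]; ring

lemma invI_eps (a : Fin m) : invI (eps a) = -eps a.rev := by
  funext i
  simp only [invI, eps, Pi.neg_apply, Fin.rev_eq_iff]

end Involution

section PartitionFunction

variable {m : ℕ} {ι ι' : Type} [Fintype ι] [Fintype ι']

lemma sum_castWt (β : Wt m) : ∑ i, castWt β i = (wtSum β : ℚ) := by
  simp [castWt, wtSum]

lemma PqPS_eq_zero_of_sum_neg (v : ι → Wt m) (hv : ∀ i, 0 ≤ wtSum (v i)) (β : QWt m)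
    (hβ : ∑ j, β j < 0) : PqPS v β = 0 := by
  ext d
  suffices IsEmpty {n : ι → ℕ // (∑ i, n i) = d ∧ castWt (∑ i, (n i : ℤ) • v i) = β} by
    simp [PqPS]
  refine ⟨fun ⟨n, _, hn⟩ => hβ.not_ge ?_⟩
  have : 0 ≤ wtSum (∑ i, (n i : ℤ) • v i) := by
    simp only [wtSum, Finset.sum_apply, Pi.smul_apply, smul_eq_mul] at hv ⊢
    rw [Finset.sum_comm]
    exact Finset.sum_nonneg fun i _ => by
      rw [← Finset.mul_sum]
      exact mul_nonneg (by positivity) (hv i)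
  rw [← hn, sum_castWt]
  exact_mod_cast this

lemma PqPS_map_addEquiv (φ : Wt m ≃+ Wt m) (v : ι → Wt m) (r : ι' → Wt m) (e : ι ≃ ι')
    (he : ∀ i, r (e i) = φ (v i)) (β : Wt m) :
    PqPS r (castWt (φ β)) = PqPS v (castWt β) := by
  ext d
  simp only [PqPS, PowerSeries.coeff_mk]
  congr 1
  refine Nat.card_congr
    (Equiv.subtypeEquiv (e.arrowCongr (Equiv.refl ℕ)).symm fun n => ?_)
  have hsum : ∑ i', (n i' : ℤ) • r i' = φ (∑ i, (n (e i) : ℤ) • v i) := by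
    rw [map_sum, ← e.sum_comp]
    simp only [he, map_zsmul]
  simp only [castWt_injective.eq_iff, hsum, φ.injective.eq_iff]
  rw [← e.sum_comp]
  rfl

end PartitionFunction

section Roots

variable {m : ℕ}

def revLT (m : ℕ) : IdxLT m ≃ IdxLT m where
  toFun p := ⟨(p.1.2.rev, p.1.1.rev), Fin.rev_lt_rev.mpr p.2⟩
  invFun p := ⟨(p.1.2.rev, p.1.1.rev), Fin.rev_lt_rev.mpr p.2⟩
  left_inv p := by simp
  right_inv p := by simp

def revLE (m : ℕ) : IdxLE m ≃ IdxLE m where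
  toFun p := ⟨(p.1.2.rev, p.1.1.rev), Fin.rev_le_rev.mpr p.2⟩
  invFun p := ⟨(p.1.2.rev, p.1.1.rev), Fin.rev_le_rev.mpr p.2⟩
  left_inv p := by simp
  right_inv p := by simp

lemma rootsD_sumCongr_revLT (i : IdxLT m ⊕ IdxLT m) :
    rootsD m (Equiv.sumCongr (revLT m) (revLT m) i) = invIEquiv m (vfSmall m i) := by
  rcases i with p | p <;>
    simp only [Equiv.sumCongr_apply, Sum.map_inl, Sum.map_inr, rootsD, vfSmall, revLT,
      Equiv.coe_fn_mk, map_sub, map_neg, map_add, invIEquiv, AddEquiv.coe_mk, Equiv.coe_fn_mk,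
      invI_eps] <;> abel

lemma rootsC_sumCongr_revLE (i : IdxLT m ⊕ IdxLE m) :
    rootsC m (Equiv.sumCongr (revLT m) (revLE m) i) = invIEquiv m (vfBig m i) := by
  rcases i with p | p <;>
    simp only [Equiv.sumCongr_apply, Sum.map_inl, Sum.map_inr, rootsC, vfBig, revLT, revLE,
      Equiv.coe_fn_mk, map_sub, map_neg, map_add, invIEquiv, AddEquiv.coe_mk, Equiv.coe_fn_mk,
      invI_eps] <;> abel

lemma PqG_D_invI (β : Wt m) : PqG RT.D (castWt (invI β)) = fq β :=
  PqPS_map_addEquiv (invIEquiv m) _ _ _ rootsD_sumCongr_revLT β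

lemma PqG_C_invI (β : Wt m) : PqG RT.C (castWt (invI β)) = Fq β :=
  PqPS_map_addEquiv (invIEquiv m) _ _ _ rootsC_sumCongr_revLE β

lemma sum_eps (a : Fin m) : ∑ j, eps a j = 1 := by
  simp [eps]

lemma PqG_eq_zero_of_sum_neg (g : RT) (β : QWt m) (hβ : ∑ j, β j < 0) : PqG g β = 0 := by
  cases g <;> refine PqPS_eq_zero_of_sum_neg _ (fun i => ?_) β hβ <;>
    rcases i with p | p | i <;>
    simp [rootsB, rootsC, rootsD, wtSum, Finset.sum_add_distrib, Finset.sum_sub_distrib,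
      sum_eps]

end Roots

section SignedPermutation

variable {m : ℕ} (σ : Equiv.Perm (Fin m)) {ε : Fin m → Bool}

def signFlips (σ : Equiv.Perm (Fin m)) (ε : Fin m → Bool) : Finset (Fin m) :=
  Finset.univ.filter fun j => ε (σ j) = true

lemma sum_sact (ε : Fin m → Bool) (V : QWt m) :
    ∑ i, sact σ ε V i = ∑ j, V j - 2 * ∑ j ∈ signFlips σ ε, V j := by
  rw [← Equiv.sum_comp σ, signFlips, Finset.sum_filter, Finset.mul_sum,
    ← Finset.sum_sub_distrib]
  refine Finset.sum_congr rfl fun j _ => ?_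
  cases h : ε (σ j) <;> simp [sact, h]; ring

lemma signFlips_nonempty (hne : ε ≠ fun _ => false) : (signFlips σ ε).Nonempty := by
  obtain ⟨i, hi⟩ := Function.ne_iff.mp hne
  exact ⟨σ.symm i, by simpa [signFlips] using hi⟩

lemma even_card_signFlips (hε : allowed RT.D ε) : Even (signFlips σ ε).card := by
  have hprod := hε rfl
  rw [← Equiv.prod_comp σ, Finset.prod_ite, Finset.prod_const_one, mul_one, Finset.prod_const]
    at hprod
  exact (neg_one_pow_eq_one_iff_even (by norm_num)).mp hprod

end SignedPermutation

section Rho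

variable {m : ℕ}

lemma rhoG_sub_rhoG {g : RT} (hg : g = RT.C ∨ g = RT.D) (a b : Fin m) :
    rhoG g m a - rhoG g m b = (b : ℚ) - a := by
  rcases hg with rfl | rfl <;> simp only [rhoG] <;> ring

lemma one_le_sum_rhoC {S : Finset (Fin m)} (hS : S.Nonempty) :
    1 ≤ ∑ j ∈ S, rhoG RT.C m j := by
  obtain ⟨a, ha⟩ := hS
  have hpos : ∀ j : Fin m, 1 ≤ rhoG RT.C m j := fun j => by
    have : (j : ℚ) + 1 ≤ m := by exact_mod_cast j.isLt
    simp only [rhoG]; linarith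
  exact (hpos a).trans
    (Finset.single_le_sum (fun j _ => zero_le_one.trans (hpos j)) ha)

lemma one_le_sum_rhoD {S : Finset (Fin m)} (hS : 1 < S.card) :
    1 ≤ ∑ j ∈ S, rhoG RT.D m j := by
  obtain ⟨a, ha, b, hb, hab⟩ := Finset.one_lt_card.mp hS
  have hnonneg : ∀ j : Fin m, 0 ≤ rhoG RT.D m j := fun j => by
    have : (j : ℚ) + 1 ≤ m := by exact_mod_cast j.isLt
    simp only [rhoG]; linarith
  have hpair : 1 ≤ rhoG RT.D m a + rhoG RT.D m b := by
    have : (a : ℕ) + b + 3 ≤ 2 * m := by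
      have := Fin.val_ne_of_ne hab; have := a.isLt; have := b.isLt; omega
    have : (a : ℚ) + b + 3 ≤ 2 * m := by exact_mod_cast this
    simp only [rhoG]; linarith
  calc 1 ≤ ∑ j ∈ {a, b}, rhoG RT.D m j := by rwa [Finset.sum_pair hab]
    _ ≤ ∑ j ∈ S, rhoG RT.D m j :=
      Finset.sum_le_sum_of_subset_of_nonneg (by simp [Finset.insert_subset_iff, ha, hb])
        fun j _ _ => hnonneg j

lemma one_le_sum_rhoG_signFlips {g : RT} (hg : g = RT.C ∨ g = RT.D)
    (σ : Equiv.Perm (Fin m)) {ε : Fin m → Bool} (hε : allowed g ε)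
    (hne : ε ≠ fun _ => false) : 1 ≤ ∑ j ∈ signFlips σ ε, rhoG g m j := by
  rcases hg with rfl | rfl
  · exact one_le_sum_rhoC (signFlips_nonempty σ hne)
  · have hpos := (signFlips_nonempty σ hne).card_pos
    obtain ⟨t, ht⟩ := even_card_signFlips σ hε
    exact one_le_sum_rhoD (by omega)

end Rho

section Duality

variable {m : ℕ} {g : RT}

lemma KF_eq_sum_perm (lam mu : QWt m)
    (hvanish : ∀ σ ε, allowed g ε → ε ≠ (fun _ => false) →
      PqG g (sact σ ε (lam + rhoG g m) - (mu + rhoG g m)) = 0) :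
    KF g lam mu = ∑ σ : Equiv.Perm (Fin m), (Equiv.Perm.sign σ : ℤ) •
      PqG g (sact σ (fun _ => false) (lam + rhoG g m) - (mu + rhoG g m)) := by
  refine Finset.sum_congr rfl fun σ _ => ?_
  rw [Finset.sum_eq_single_of_mem (fun _ => false) (by simp [allowed])
    fun ε hε hne => by rw [hvanish σ ε (Finset.mem_filter.mp hε).2 hne, smul_zero]]
  simp [ssign]

variable (ν η : Wt m) (n k : ℤ)

lemma sact_hatP_sub_hatP (hg : g = RT.C ∨ g = RT.D) (σ : Equiv.Perm (Fin m)) :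
    sact σ (fun _ => false) (castWt (hatP n ν + k • kappa m) + rhoG g m)
        - (castWt (hatP n η + k • kappa m) + rhoG g m)
      = castWt (invI (pact (Fin.revPerm.permCongr σ) (ν + rhoZ m) - η - rhoZ m)) := by
  funext i
  have hρ := rhoG_sub_rhoG hg (σ.symm i) i
  have hrev : ∀ j : Fin m, (j.rev : ℚ) = m - 1 - j := fun j => by
    rw [Fin.val_rev, Nat.cast_sub (Nat.succ_le_of_lt j.isLt)]
    push_cast
    ring
  have hσ : (Fin.revPerm.permCongr σ).symm i.rev = (σ.symm i).rev := by
    rw [Equiv.symm_apply_eq, Equiv.permCongr_apply]; simp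
  simp only [sact, Pi.sub_apply, Pi.add_apply, castWt, hatP, Pi.smul_apply, kappa,
    smul_eq_mul, mul_one, invI, pact, Function.comp_apply, rhoZ, Bool.false_eq_true,
    if_false, one_mul, hσ]
  push_cast
  rw [hrev, hrev]
  linarith

lemma sum_sact_hatP_sub_hatP_neg (hg : g = RT.C ∨ g = RT.D) (hν : ∀ j, ν j ≤ n)
    (hk : 0 ≤ k) (hsum : wtSum η - wtSum ν ≤ 2 * k) (σ : Equiv.Perm (Fin m)) {ε : Fin m → Bool}
    (hε : allowed g ε) (hne : ε ≠ fun _ => false) :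
    ∑ i, (sact σ ε (castWt (hatP n ν + k • kappa m) + rhoG g m)
        - (castWt (hatP n η + k • kappa m) + rhoG g m)) i < 0 := by
  set S := signFlips σ ε
  set V := castWt (hatP n ν + k • kappa m) + rhoG g m
  have hVU : ∑ j, V j - ∑ j, (castWt (hatP n η + k • kappa m) + rhoG g m) j
      = wtSum η - wtSum ν := by
    rw [← Finset.sum_sub_distrib, ← Equiv.sum_comp Fin.revPerm]
    simp only [V, wtSum, castWt, hatP, Pi.add_apply, Pi.smul_apply, kappa, Fin.revPerm_apply,
      Fin.rev_rev, smul_eq_mul, mul_one, add_sub_add_right_eq_sub, Int.cast_sub, Int.cast_add]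
    push_cast
    rw [← Finset.sum_sub_distrib]
    exact Finset.sum_congr rfl fun j _ => by ring
  have hVS : k + 1 ≤ ∑ j ∈ S, V j := by
    have hρ := one_le_sum_rhoG_signFlips hg σ hε hne
    have hV : ∀ j, (k : ℚ) + rhoG g m j ≤ V j := fun j => by
      have : (ν j.rev : ℚ) ≤ n := by exact_mod_cast hν j.rev
      simp only [V, Pi.add_apply, castWt, hatP, Pi.smul_apply, kappa, smul_eq_mul, mul_one]
      push_cast
      linarith
    have hcard : (1 : ℚ) ≤ S.card := by
      exact_mod_cast (signFlips_nonempty σ hne).card_pos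
    have hk' : (0 : ℚ) ≤ k := by exact_mod_cast hk
    calc (k : ℚ) + 1 ≤ S.card * k + ∑ j ∈ S, rhoG g m j := by nlinarith
      _ = ∑ j ∈ S, ((k : ℚ) + rhoG g m j) := by
        rw [Finset.sum_add_distrib, Finset.sum_const, nsmul_eq_mul]
      _ ≤ ∑ j ∈ S, V j := Finset.sum_le_sum fun j _ => hV j
  have hsum' : (wtSum η : ℚ) - wtSum ν ≤ 2 * k := by exact_mod_cast hsum
  simp only [Pi.sub_apply, Finset.sum_sub_distrib, sum_sact]
  linarith

theorem sum_sign_smul_eq_KF_hatP (hg : g = RT.C ∨ g = RT.D) (P : Wt m → PowerSeries ℤ)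
    (hP : ∀ β, PqG g (castWt (invI β)) = P β) (hν : ∀ j, ν j ≤ n) (hk : 0 ≤ k)
    (hsum : wtSum η - wtSum ν ≤ 2 * k) :
    ∑ σ : Equiv.Perm (Fin m),
        (Equiv.Perm.sign σ : ℤ) • P (pact σ (ν + rhoZ m) - η - rhoZ m)
      = KF g (castWt (hatP n ν + k • kappa m)) (castWt (hatP n η + k • kappa m)) := by
  rw [KF_eq_sum_perm _ _ fun σ ε hε hne => PqG_eq_zero_of_sum_neg g _
    (sum_sact_hatP_sub_hatP_neg ν η n k hg hν hk hsum σ hε hne)]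
  simp only [sact_hatP_sub_hatP ν η n k hg, hP]
  exact (Fintype.sum_equiv Fin.revPerm.permCongr _ _ fun σ => by
    rw [Equiv.Perm.sign_permCongr]).symm

end Duality

variable {m : ℕ} (ν η : Wt m) (n k : ℤ)

theorem uP_eq_KF_D (hν : ∀ j, ν j ≤ n) (hk : 0 ≤ k) (hsum : wtSum η - wtSum ν ≤ 2 * k) :
    uP ν η = KF RT.D (castWt (hatP n ν + k • kappa m)) (castWt (hatP n η + k • kappa m)) :=
  sum_sign_smul_eq_KF_hatP ν η n k (Or.inr rfl) fq PqG_D_invI hν hk hsum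

theorem UP_eq_KF_C (hν : ∀ j, ν j ≤ n) (hk : 0 ≤ k) (hsum : wtSum η - wtSum ν ≤ 2 * k) :
    UP ν η = KF RT.C (castWt (hatP n ν + k • kappa m)) (castWt (hatP n η + k • kappa m)) :=
  sum_sign_smul_eq_KF_hatP ν η n k (Or.inl rfl) Fq PqG_C_invI hν hk hsum

section Conjugate

variable {l : ℕ} {lam : Wt l}

lemma IsPart.le_head (hlam : IsPart lam) (hl : 1 ≤ l) (i : Fin l) : lam i ≤ lam ⟨0, hl⟩ :=
  hlam.1 (Nat.zero_le _)

lemma card_filter_fin_lt (m : ℕ) {c : ℤ} (h0 : 0 ≤ c) (hm : c ≤ m) :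
    ((Finset.univ.filter fun j : Fin m => ((j : ℕ) : ℤ) < c).card : ℤ) = c := by
  have hc : (Finset.univ.filter fun j : Fin m => ((j : ℕ) : ℤ) < c)
      = Finset.univ.filter fun j : Fin m => (j : ℕ) < c.toNat := by
    ext j; simp only [Finset.mem_filter, Finset.mem_univ, true_and]; omega
  rw [hc, Fin.card_filter_val_lt]
  omega

lemma wtSum_conj (m : ℕ) (h0 : ∀ i, 0 ≤ lam i) (hm : ∀ i, lam i ≤ m) :
    wtSum (conj m lam) = wtSum lam := by
  simp only [wtSum, conj, Finset.card_filter, Nat.cast_sum, Nat.cast_ite, Nat.cast_one,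
    Nat.cast_zero]
  rw [Finset.sum_comm]
  refine Finset.sum_congr rfl fun i _ => ?_
  have hcount := card_filter_fin_lt m (h0 i) (hm i)
  rw [Finset.card_filter] at hcount
  push_cast at hcount
  exact hcount

lemma conj_le_card_pos (m : ℕ) (j : Fin m) :
    conj m lam j ≤ ((Finset.univ.filter fun i : Fin l => 0 < lam i).card : ℤ) := by
  refine Nat.cast_le.mpr (Finset.card_le_card (Finset.monotone_filter_right _ ?_))
  intro i _ (hi : ((j : ℕ) : ℤ) < lam i)
  omega

end Conjugate

theorem stmt17_general (l : ℕ) (hl : 1 ≤ l) (lam mu : Wt l) (hlam : IsPart lam) (hmu : IsPart mu)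
    (hone : wtSum lam ≤ wtSum mu)
    (m : ℕ) (hm : (m : ℤ) = max (lam ⟨0, hl⟩) (mu ⟨0, hl⟩))
    (n : ℤ)
    (hn : n = max ((Finset.univ.filter (fun i : Fin l => 0 < lam i)).card : ℤ)
              ((Finset.univ.filter (fun i : Fin l => 0 < mu i)).card : ℤ))
    (k : ℤ) (hk : wtSum mu - wtSum lam ≤ 2 * k) :
    uP (conj m lam) (conj m mu) =
      KF RT.D (castWt (hatP n (conj m lam) + k • kappa m))
              (castWt (hatP n (conj m mu) + k • kappa m)) ∧
    UP (conj m lam) (conj m mu) =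
      KF RT.C (castWt (hatP n (conj m lam) + k • kappa m))
              (castWt (hatP n (conj m mu) + k • kappa m)) := by
  have hk0 : 0 ≤ k := by omega
  have hlam_le (i : Fin l) : lam i ≤ m := (hlam.le_head hl i).trans (hm ▸ le_max_left _ _)
  have hmu_le (i : Fin l) : mu i ≤ m := (hmu.le_head hl i).trans (hm ▸ le_max_right _ _)
  have hsum : wtSum (conj m mu) - wtSum (conj m lam) ≤ 2 * k := by
    rwa [wtSum_conj m hlam.2 hlam_le, wtSum_conj m hmu.2 hmu_le]
  have hν (j : Fin m) : conj m lam j ≤ n := (conj_le_card_pos m j).trans (hn ▸ le_max_left _ _)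
  exact ⟨uP_eq_KF_D _ _ n k hν hk0 hsum, UP_eq_KF_C _ _ n k hν hk0 hsum⟩

/-- (Second duality theorem.) For partitions `λ, μ` of length `l`
with `l ≥ |μ| ≥ |λ|`, `m = max(λ_1, μ_1)`, conjugates `λ', μ'` regarded as partitions
of length `m`, `n = max(λ'_1, μ'_1)`, `λ̃ = (n-λ'_m,…,n-λ'_1)`,
`μ̃ = (n-μ'_m,…,n-μ'_1)` and any integer `k ≥ (|μ|-|λ|)/2`:
`v_{λ,μ}(q) = u_{λ',μ'}(q) = K^{D_m}_{λ̃+kκ_m, μ̃+kκ_m}(q)` and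
`V_{λ,μ}(q) = U_{λ',μ'}(q) = K^{C_m}_{λ̃+kκ_m, μ̃+kκ_m}(q)`. -/
theorem stmt17 (l : ℕ) (hl : 1 ≤ l) (lam mu : Wt l) (hlam : IsPart lam) (hmu : IsPart mu)
    (hone : wtSum lam ≤ wtSum mu) (htwo : wtSum mu ≤ (l : ℤ))
    (m : ℕ) (hm : (m : ℤ) = max (lam ⟨0, hl⟩) (mu ⟨0, hl⟩))
    (n : ℤ)
    (hn : n = max ((Finset.univ.filter (fun i : Fin l => 0 < lam i)).card : ℤ)
              ((Finset.univ.filter (fun i : Fin l => 0 < mu i)).card : ℤ))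
    (k : ℤ) (hk : wtSum mu - wtSum lam ≤ 2 * k) :
    uP (conj m lam) (conj m mu) =
      KF RT.D (castWt (hatP n (conj m lam) + k • kappa m))
              (castWt (hatP n (conj m mu) + k • kappa m)) ∧
    UP (conj m lam) (conj m mu) =
      KF RT.C (castWt (hatP n (conj m lam) + k • kappa m))
              (castWt (hatP n (conj m mu) + k • kappa m)) :=
  stmt17_general l hl lam mu hlam hmu hone m hm n hn k hk

end
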